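/- arXiv:0806.2814 — 2 statements merged into one kernel-verified Lean document; each statement's English description precedes it below -/
import Mathlib

section
/- For the mechanical Hamiltonian H_m = p₀v₀ + q₀ + p₁v₁ + p₂v₂ + p₃v₃ + q₁(−Γ¹₂₂v₂² − Γ¹₃₃v₃² + u₁) + q₂u₂(1−x) + q₃x²u₂, the momenta curve (p₀,p₁,p₂,p₃,q₀,q₁,q₂,q₃)(t) = (0,0,0,c,0,0,0,−ct+A), with c and A constants not both zero, satisfies the adjoint Hamilton equations ṗ₀=0, ṗ₁ = (∂Γ¹₂₂/∂x)q₁v₂² + (∂Γ¹₃₃/∂x)q₁v₃² + q₂u₂ − 2xu₂q₃, ṗ₂=0, ṗ₃=0, q̇₀=−p₀, q̇₁=−p₁, q̇₂=−p₂+2q₁Γ¹₂₂v₂, q̇₃=−p₃+2v₃Γ¹₃₃q₁ along the curve (t,0,t,0,1,0,1,0) with controls u₁=u₂=1, is never zero, and gives H_m ≡ 0 along the curve. -/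
theorem hasDerivAt_neg_mul_add (c A t : ℝ) : HasDerivAt (fun s : ℝ => -c * s + A) (-c) t := by
  simpa using ((hasDerivAt_id t).const_mul (-c)).add_const A

theorem neg_mul_add_ne_zero_of_slope_eq_zero {c A : ℝ} (hcA : ¬(c = 0 ∧ A = 0)) (hc : c = 0)
    (t : ℝ) : -c * t + A ≠ 0 := by
  subst hc
  simpa using hcA

/-- The momenta (p₀,p₁,p₂,p₃,q₀,q₁,q₂,q₃)(t) = (0,0,0,c,0,0,0,−ct+A), with (c,A) ≠ (0,0),
satisfy the adjoint Hamilton equations of the mechanical system along the curve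
(t,0,t,0,1,0,1,0) with controls u₁ = u₂ = 1, never vanish, and make H_m ≡ 0:
the curve is an abnormal extremal (p₀ = q₀ = 0). -/
theorem abnormal_extremal_mechanical (c A : ℝ) (hcA : ¬(c = 0 ∧ A = 0)) :
    let Γ : ℝ → ℝ := fun x => (1 - x - 2 * x ^ 3) / ((1 - x) ^ 2 + x ^ 4) ^ 2
    -- the curve and controls
    let x : ℝ → ℝ := fun _ => 0
    let v₀ : ℝ → ℝ := fun _ => 1
    let v₁ : ℝ → ℝ := fun _ => 0
    let v₂ : ℝ → ℝ := fun _ => 1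
    let v₃ : ℝ → ℝ := fun _ => 0
    let u₁ : ℝ := 1
    let u₂ : ℝ := 1
    -- the momenta
    let p₀ : ℝ → ℝ := fun _ => 0
    let p₁ : ℝ → ℝ := fun _ => 0
    let p₂ : ℝ → ℝ := fun _ => 0
    let p₃ : ℝ → ℝ := fun _ => c
    let q₀ : ℝ → ℝ := fun _ => 0
    let q₁ : ℝ → ℝ := fun _ => 0
    let q₂ : ℝ → ℝ := fun _ => 0
    let q₃ : ℝ → ℝ := fun t => -c * t + A
    -- adjoint Hamilton equations
    (∀ t : ℝ, HasDerivAt p₀ 0 t) ∧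
    (∀ t : ℝ, HasDerivAt p₁
      (deriv Γ (x t) * q₁ t * (v₂ t) ^ 2 + deriv Γ (x t) * q₁ t * (v₃ t) ^ 2
        + q₂ t * u₂ - 2 * x t * u₂ * q₃ t) t) ∧
    (∀ t : ℝ, HasDerivAt p₂ 0 t) ∧
    (∀ t : ℝ, HasDerivAt p₃ 0 t) ∧
    (∀ t : ℝ, HasDerivAt q₀ (-(p₀ t)) t) ∧
    (∀ t : ℝ, HasDerivAt q₁ (-(p₁ t)) t) ∧
    (∀ t : ℝ, HasDerivAt q₂ (-(p₂ t) + 2 * q₁ t * Γ (x t) * v₂ t) t) ∧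
    (∀ t : ℝ, HasDerivAt q₃ (-(p₃ t) + 2 * v₃ t * Γ (x t) * q₁ t) t) ∧
    -- the momenta covector never vanishes
    (∀ t : ℝ, ¬(p₀ t = 0 ∧ p₁ t = 0 ∧ p₂ t = 0 ∧ p₃ t = 0 ∧
                q₀ t = 0 ∧ q₁ t = 0 ∧ q₂ t = 0 ∧ q₃ t = 0)) ∧
    -- the Hamiltonian vanishes along the curve
    (∀ t : ℝ,
      p₀ t * v₀ t + q₀ t + p₁ t * v₁ t + p₂ t * v₂ t + p₃ t * v₃ t
        + q₁ t * (-Γ (x t) * (v₂ t) ^ 2 - Γ (x t) * (v₃ t) ^ 2 + u₁)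
        + q₂ t * u₂ * (1 - x t) + q₃ t * (x t) ^ 2 * u₂ = 0) := by
  intro Γ x v₀ v₁ v₂ v₃ u₁ u₂ p₀ p₁ p₂ p₃ q₀ q₁ q₂ q₃
  refine ⟨fun t => hasDerivAt_const t 0, fun t => ?_, fun t => hasDerivAt_const t 0,
    fun t => hasDerivAt_const t c, fun t => ?_, fun t => ?_, fun t => ?_, fun t => ?_,
    fun t ⟨_, _, _, hc, _, _, _, hq⟩ => neg_mul_add_ne_zero_of_slope_eq_zero hcA hc t hq,
    fun t => ?_⟩
  · simpa [x, q₁, q₂] using hasDerivAt_const t (0 : ℝ)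
  · simpa [p₀] using hasDerivAt_const t (0 : ℝ)
  · simpa [p₁] using hasDerivAt_const t (0 : ℝ)
  · simpa [p₂, q₁] using hasDerivAt_const t (0 : ℝ)
  · convert hasDerivAt_neg_mul_add c A t using 1
    simp [p₃, v₃, q₁]
  · simp [p₀, q₀, p₁, p₂, p₃, v₃, q₁, q₂, x]
end

section
/- With H_m as above and along the curve (t,0,t,0,1,0,1,0) with controls u₁ = u₂ = 1, suppose the momenta satisfy the stationarity conditions q₁ = 0 and q₂ = 0 and the adjoint Hamilton equations. If p₀ = −1 then q₀(t) = t + B for some constant B and H_m(t) = −1 + t + B; if p₀ = 0 and q₀ = −1 then H_m(t) = −1. In neither case is H_m zero for almost every t ∈ [0,1]. -/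
/-!
Along the curve, `q₂ ≡ 0` and the adjoint equation for `q₂` force `p₂ ≡ 0`, so that
`H_m = p₀ + q₀`. For `p₀ = -1` this is affine of slope `1`, for `q₀ = -1` it is the constant
`-1`; either way its zero set is countable, hence null, and cannot carry almost all of `[0,1]`.
-/

open MeasureTheory Set

theorem HasDerivAt.eq_zero_of_forall_eq {𝕜 F : Type*} [NontriviallyNormedField 𝕜]
    [NormedAddCommGroup F] [NormedSpace 𝕜 F] {f : 𝕜 → F} {f' c : F} {x : 𝕜}
    (hf : HasDerivAt f f' x) (hc : ∀ y, f y = c) : f' = 0 :=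
  hf.unique (by rw [funext hc]; exact hasDerivAt_const x c)

theorem eq_add_smul_of_forall_hasDerivAt {𝕜 F : Type*} [RCLike 𝕜]
    [NormedAddCommGroup F] [NormedSpace 𝕜 F] {f : 𝕜 → F} {a : F}
    (hf : ∀ x, HasDerivAt f a x) (x : 𝕜) : f x = f 0 + x • a := by
  have hg : ∀ y, HasDerivAt (f - fun y => y • a) 0 y := fun y => by
    simpa using (hf y).sub ((hasDerivAt_id y).smul_const a)
  have := is_const_of_deriv_eq_zero (fun y => (hg y).differentiableAt) (fun y => (hg y).deriv) x 0
  simpa [sub_eq_iff_eq_add] using this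

theorem not_ae_of_countable_setOf {α : Type*} [MeasurableSpace α] {μ : Measure α}
    [NullSingletonClass μ] (hμ : μ ≠ 0) {P : α → Prop} (hP : {x | P x}.Countable) :
    ¬ ∀ᵐ x ∂μ, P x := by
  have := ae_neBot.2 hμ
  intro h
  obtain ⟨x, hx, hx'⟩ := (h.and (hP.ae_notMem μ)).exists
  exact hx' hx

theorem no_normal_momenta_mechanical_general (c : ℝ) (p₁ p₂ q₁ q₂ q₃ : ℝ → ℝ)
    -- stationarity conditions ∂H_m/∂u₁ = q₁ = 0 and ∂H_m/∂u₂ = q₂ = 0 along the curve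
    (hq₁ : ∀ t, q₁ t = 0) (hq₂ : ∀ t, q₂ t = 0)
    -- adjoint Hamilton equations for q₁, q₂ (along the curve x = 0, v₂ = 1, Γ(0) = 1)
    (hq₂' : ∀ t, HasDerivAt q₂ (-(p₂ t) + 2 * q₁ t * 1 * 1) t) :
    -- H_m along the curve: v₀ = 1, v₁ = 0, v₂ = 1, v₃ = 0, x = 0, u₁ = u₂ = 1, p₃ = c
    let Hm : ℝ → ℝ → ℝ → ℝ := fun p₀ q₀t t =>
      p₀ * 1 + q₀t + p₁ t * 0 + p₂ t * 1 + c * 0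
        + q₁ t * (-1 * 1 ^ 2 - 1 * 0 ^ 2 + 1) + q₂ t * 1 * (1 - 0) + q₃ t * 0 ^ 2 * 1
    -- case p₀ = −1 : q̇₀ = −p₀ = 1 forces q₀(t) = t + B, and H_m = −1 + t + B
    (∀ q₀ : ℝ → ℝ, (∀ t, HasDerivAt q₀ (-(-1 : ℝ)) t) →
      ∃ B : ℝ, (∀ t, q₀ t = t + B) ∧ (∀ t, Hm (-1) (q₀ t) t = -1 + t + B) ∧
        ¬ (∀ᵐ t ∂(volume.restrict (Set.Icc (0:ℝ) 1)), Hm (-1) (q₀ t) t = 0)) ∧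
    -- case p₀ = 0, q₀ = −1 : H_m = −1
    ((∀ t : ℝ, Hm 0 (-1) t = -1) ∧
      ¬ (∀ᵐ t ∂(volume.restrict (Set.Icc (0:ℝ) 1)), Hm 0 (-1) t = 0)) := by
  intro Hm
  have hp₂ : ∀ t, p₂ t = 0 := fun t => by
    simpa [hq₁] using (hq₂' t).eq_zero_of_forall_eq hq₂
  have hHm : ∀ p₀ q₀t t, Hm p₀ q₀t t = p₀ + q₀t := fun p₀ q₀t t => by
    simp [Hm, hq₂, hp₂]
  have hμ : volume.restrict (Icc (0:ℝ) 1) ≠ 0 := by simp [Measure.restrict_eq_zero]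
  refine ⟨fun q₀ hq₀' => ?_, fun t => by simp [hHm], ?_⟩
  · have hq₀ : ∀ t, q₀ t = t + q₀ 0 := fun t => by
      simpa [add_comm] using eq_add_smul_of_forall_hasDerivAt hq₀' t
    refine ⟨q₀ 0, hq₀, fun t => by rw [hHm, hq₀]; ring, not_ae_of_countable_setOf hμ ?_⟩
    refine (countable_singleton (1 - q₀ 0)).mono fun t ht => ?_
    rw [mem_ofPred_eq, hHm, hq₀] at ht
    rw [mem_singleton_iff]
    linarith
  · exact not_ae_of_countable_setOf hμ (by simp [hHm])

/-- No normal momenta for the mechanical extremal (t,0,t,0,1,0,1,0) with u₁ = u₂ = 1: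
if p₀ = −1 then q₀(t) = t + B and H_m = −1 + t + B; if p₀ = 0 and q₀ = −1 then
H_m = −1. In neither case is H_m zero almost everywhere on [0,1]. -/
theorem no_normal_momenta_mechanical (c : ℝ) (p₁ p₂ q₁ q₂ q₃ : ℝ → ℝ)
    -- stationarity conditions ∂H_m/∂u₁ = q₁ = 0 and ∂H_m/∂u₂ = q₂ = 0 along the curve
    (hq₁ : ∀ t, q₁ t = 0) (hq₂ : ∀ t, q₂ t = 0)
    -- adjoint Hamilton equations for q₁, q₂ (along the curve x = 0, v₂ = 1, Γ(0) = 1)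
    (hq₁' : ∀ t, HasDerivAt q₁ (-(p₁ t)) t)
    (hq₂' : ∀ t, HasDerivAt q₂ (-(p₂ t) + 2 * q₁ t * 1 * 1) t) :
    -- H_m along the curve: v₀ = 1, v₁ = 0, v₂ = 1, v₃ = 0, x = 0, u₁ = u₂ = 1, p₃ = c
    let Hm : ℝ → ℝ → ℝ → ℝ := fun p₀ q₀t t =>
      p₀ * 1 + q₀t + p₁ t * 0 + p₂ t * 1 + c * 0
        + q₁ t * (-1 * 1 ^ 2 - 1 * 0 ^ 2 + 1) + q₂ t * 1 * (1 - 0) + q₃ t * 0 ^ 2 * 1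
    -- case p₀ = −1 : q̇₀ = −p₀ = 1 forces q₀(t) = t + B, and H_m = −1 + t + B
    (∀ q₀ : ℝ → ℝ, (∀ t, HasDerivAt q₀ (-(-1 : ℝ)) t) →
      ∃ B : ℝ, (∀ t, q₀ t = t + B) ∧ (∀ t, Hm (-1) (q₀ t) t = -1 + t + B) ∧
        ¬ (∀ᵐ t ∂(volume.restrict (Set.Icc (0:ℝ) 1)), Hm (-1) (q₀ t) t = 0)) ∧
    -- case p₀ = 0, q₀ = −1 : H_m = −1
    ((∀ t : ℝ, Hm 0 (-1) t = -1) ∧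
      ¬ (∀ᵐ t ∂(volume.restrict (Set.Icc (0:ℝ) 1)), Hm 0 (-1) t = 0)) :=
  no_normal_momenta_mechanical_general c p₁ p₂ q₁ q₂ q₃ hq₁ hq₂ hq₂'
end
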